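/- arXiv:0809.1379 — 4 statements merged into one kernel-verified Lean document; each statement's English description precedes it below -/
import Mathlib

section
/- For every natural number N and every real t ≥ 0, Σ_{x=0}^{N} (N choose x) · exp(−2·(N + x·(N−x))·t) ≤ 2·exp(−2·N·t)·(1 + exp(−N·t))^N. -/
open Finset Real

theorem sum_range_choose_mul_pow_add_pow {R : Type*} [CommSemiring R] (a : R) (N : ℕ) :
    ∑ x ∈ range (N + 1), (N.choose x : R) * (a ^ x + a ^ (N - x)) = 2 * (1 + a) ^ N := by
  have h₁ := add_pow a 1 N
  have h₂ := add_pow 1 a N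
  simp only [one_pow, mul_one, one_mul] at h₁ h₂
  rw [two_mul]
  nth_rw 1 [add_comm 1 a]
  rw [h₁, h₂, ← sum_add_distrib]
  exact sum_congr rfl fun x _ => by ring

/-- Whichever of `y`, `z` is smaller gives `(y + z) min(y, z) ≤ 2 y z`. -/
theorem exp_neg_two_mul_le_exp_add_exp {y z t : ℝ} (hy : 0 ≤ y) (hz : 0 ≤ z) (ht : 0 ≤ t) :
    exp (-2 * (y * z) * t) ≤ exp (-((y + z) * y) * t) + exp (-((y + z) * z) * t) := by
  wlog hyz : y ≤ z generalizing y z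
  · have := this hz hy (le_of_not_ge hyz)
    rw [mul_comm z y, add_comm z y] at this
    linarith
  have hle : exp (-2 * (y * z) * t) ≤ exp (-((y + z) * y) * t) :=
    exp_le_exp.mpr (by nlinarith [mul_nonneg (mul_nonneg hy (sub_nonneg.mpr hyz)) ht])
  linarith [exp_pos (-((y + z) * z) * t)]

theorem exp_neg_two_mul_mul_sub_le {N x : ℕ} (hx : x ≤ N) {t : ℝ} (ht : 0 ≤ t) :
    exp (-2 * ((x : ℝ) * ((N : ℝ) - x)) * t) ≤ exp (-N * t) ^ x + exp (-N * t) ^ (N - x) := by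
  have h := exp_neg_two_mul_le_exp_add_exp (Nat.cast_nonneg x)
    (sub_nonneg.mpr (Nat.cast_le.mpr hx)) ht
  rw [← exp_nat_mul, ← exp_nat_mul, Nat.cast_sub hx]
  convert h using 3 <;> ring

/-- combinatorial core of the paper's Corollary 4.
For every natural `N` and real `t ≥ 0`,
`∑_{x=0}^{N} (N choose x) exp(-2 (N + x (N-x)) t) ≤ 2 exp(-2 N t) (1 + exp(-N t))^N`. -/
theorem stmt_1 (N : ℕ) (t : ℝ) (ht : 0 ≤ t) :
    ∑ x ∈ Finset.range (N + 1),
        (N.choose x : ℝ) * Real.exp (-2 * ((N : ℝ) + (x : ℝ) * ((N : ℝ) - (x : ℝ))) * t)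
      ≤ 2 * Real.exp (-2 * (N : ℝ) * t) * (1 + Real.exp (-(N : ℝ) * t)) ^ N := by
  set E := exp (-(N : ℝ) * t)
  calc ∑ x ∈ range (N + 1),
        (N.choose x : ℝ) * exp (-2 * ((N : ℝ) + x * ((N : ℝ) - x)) * t)
      ≤ ∑ x ∈ range (N + 1), exp (-2 * N * t) * ((N.choose x : ℝ) * (E ^ x + E ^ (N - x))) := by
        refine sum_le_sum fun x hx => ?_
        have hbound := exp_neg_two_mul_mul_sub_le (Nat.lt_succ_iff.mp (mem_range.mp hx)) ht
        rw [show -2 * ((N : ℝ) + x * (N - x)) * t = -2 * N * t + -2 * (x * (N - x)) * t by ring,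
          exp_add, mul_left_comm]
        gcongr
    _ = 2 * exp (-2 * N * t) * (1 + E) ^ N := by
        rw [← mul_sum, sum_range_choose_mul_pow_add_pow]
        ring
end

section
/- Let V be a finite set of n ≥ 4 vertices carrying a random graph as in the context, let s ≠ t be vertices of V, let λ ∈ (0,1], and suppose that P(C_{a,b} = 1) ≥ λ for every unordered pair {a,b} of distinct vertices and that the random graph has the independence-in-cut property for (s,t). For a real ε > 0 and each s-t cut S, let A_S be the event { C(S) ≤ (1−ε)·E[C(S)] }. Then P( ∪_S A_S ) ≤ 2·exp(−2·ε²·λ²·(n−2)) · (1 + exp(−ε²·λ²·(n−2)))^{n−2}, where the union is over all s-t cuts S. -/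
/-!
For a fixed `s`-`t` cut `S`, the capacity `C(S)` is a sum of `|S| (n - |S|)` independent
`{0,1}`-valued variables of mean at least `λ`, so Hoeffding's inequality gives
`P(A_S) ≤ exp (-2 ε² λ² |S| (n - |S|))`. The cuts are `S = {s} ∪ T` with `T ⊆ V ∖ {s, t}`; with
`N = n - 2`, `q = ε² λ²` and `|T| = j` the exponent is `2q (j + 1)(N + 1 - j)`, which is at least
`2qN + qN min(j, N - j)`. Summing over the `choose N j` cuts of each size and bounding
`x ^ min(j, N - j) ≤ x ^ j + x ^ (N - j)` with `x = exp (-qN)`, the binomial theorem gives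
`2 exp (-2qN) (1 + x) ^ N`.
-/

open MeasureTheory ProbabilityTheory Finset

/-- The capacity of the cut determined by `S` (edges from `S` to its complement):
`C(S) = ∑_{a ∈ S, b ∉ S} C_{a,b}`. -/
noncomputable def cutCap {V Ω : Type*} [Fintype V] [DecidableEq V]
    (C : V → V → Ω → ℝ) (S : Finset V) (ω : Ω) : ℝ :=
  ∑ a ∈ S, ∑ b ∈ Sᶜ, C a b ω

/-- The independence-in-cut property for the pair `(s,t)`: for every `s`-`t` cut `S`,
the family of edge variables crossing the cut is mutually independent. -/
def IndepInCut {V Ω : Type*} [Fintype V] [DecidableEq V] [MeasureSpace Ω]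
    (C : V → V → Ω → ℝ) (s t : V) : Prop :=
  ∀ S : Finset V, s ∈ S → t ∉ S →
    iIndepFun
      (fun p : (S ×ˢ Sᶜ : Finset (V × V)) => C (p : V × V).1 (p : V × V).2) volume

open Real

theorem integral_eq_measureReal_of_zero_or_one {Ω : Type*} [MeasurableSpace Ω]
    {μ : Measure Ω} {X : Ω → ℝ} (hX : Measurable X) (h01 : ∀ ω, X ω = 0 ∨ X ω = 1) :
    μ[X] = μ.real {ω | X ω = 1} := by
  have hX_eq : X = {ω | X ω = 1}.indicator 1 := by
    ext ω
    rcases h01 ω with h | h <;> simp [h]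
  conv_lhs => rw [hX_eq]
  exact integral_indicator_one (hX (measurableSet_singleton 1))

section Hoeffding

variable {Ω ι : Type*} [MeasurableSpace Ω] {μ : Measure Ω} [Fintype ι] {X : ι → Ω → ℝ}

theorem measureReal_sum_le_sum_integral_sub_le (hindep : iIndepFun X μ)
    (hmeas : ∀ i, AEMeasurable (X i) μ) (hbdd : ∀ i, ∀ᵐ ω ∂μ, X i ω ∈ Set.Icc (0 : ℝ) 1)
    {δ : ℝ} (hδ : 0 ≤ δ) :
    μ.real {ω | ∑ i, X i ω ≤ ∑ i, μ[X i] - δ} ≤ exp (-2 * δ ^ 2 / Fintype.card ι) := by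
  have := hindep.isProbabilityMeasure
  -- `by exact` elaborates the composition before unifying it with the stated family
  have hdev : iIndepFun (fun i ω => μ[X i] - X i ω) μ := by
    exact hindep.comp (fun i (y : ℝ) => μ[X i] - y) (fun i => by fun_prop)
  have hsub : ∀ i ∈ (univ : Finset ι),
      HasSubgaussianMGF (fun ω => μ[X i] - X i ω) ((‖(1 : ℝ) - 0‖₊ / 2) ^ 2) μ := fun i _ =>
    (hasSubgaussianMGF_of_mem_Icc (hmeas i) (hbdd i)).neg.congr (ae_of_all _ fun ω => by simp)
  convert HasSubgaussianMGF.measure_sum_ge_le_of_iIndepFun hdev hsub hδ using 2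
  · ext ω
    simp only [Set.mem_ofPred_eq, sum_sub_distrib]
    constructor <;> intro h <;> linarith
  · simp only [sub_zero, nnnorm_one, sum_const, card_univ, nsmul_eq_mul, NNReal.coe_mul,
      NNReal.coe_natCast, NNReal.coe_pow, NNReal.coe_div, NNReal.coe_one, NNReal.coe_ofNat]
    ring

theorem measureReal_sum_le_one_sub_mul_integral_le (hindep : iIndepFun X μ)
    (hmeas : ∀ i, AEMeasurable (X i) μ) (hbdd : ∀ i, ∀ᵐ ω ∂μ, X i ω ∈ Set.Icc (0 : ℝ) 1)
    {lam ε : ℝ} (hlam : 0 ≤ lam) (hmean : ∀ i, lam ≤ μ[X i]) (hε : 0 ≤ ε) :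
    μ.real {ω | ∑ i, X i ω ≤ (1 - ε) * ∫ ω, ∑ i, X i ω ∂μ}
      ≤ exp (-2 * ε ^ 2 * lam ^ 2 * Fintype.card ι) := by
  have := hindep.isProbabilityMeasure
  set m : ℝ := (Fintype.card ι : ℝ)
  set M : ℝ := ∑ i, μ[X i]
  have hM : lam * m ≤ M := by
    simpa [m, mul_comm] using sum_le_sum fun i (_ : i ∈ univ) => hmean i
  have hM0 : 0 ≤ M := (mul_nonneg hlam (Nat.cast_nonneg _)).trans hM
  have hint : ∫ ω, ∑ i, X i ω ∂μ = M :=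
    integral_finsetSum _ fun i _ => Integrable.of_mem_Icc 0 1 (hmeas i) (hbdd i)
  rw [hint, show (1 - ε) * M = M - ε * M by ring]
  refine (measureReal_sum_le_sum_integral_sub_le hindep hmeas hbdd
    (mul_nonneg hε hM0)).trans (exp_le_exp.2 ?_)
  rcases (Nat.cast_nonneg (α := ℝ) (Fintype.card ι)).eq_or_lt with hm | hm
  · simp [m, ← hm]
  · rw [div_le_iff₀ hm]
    have : lam * m * (lam * m) ≤ M * M := mul_le_mul hM hM (by positivity) hM0
    nlinarith [sq_nonneg ε]

end Hoeffding

section Cuts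

variable {V : Type*} [Fintype V] [DecidableEq V]

theorem cutCap_eq_sum_crossing {Ω : Type*} (C : V → V → Ω → ℝ) (S : Finset V) :
    cutCap C S = fun ω => ∑ p : (S ×ˢ Sᶜ : Finset (V × V)), C (p : V × V).1 (p : V × V).2 ω := by
  ext ω
  rw [cutCap, ← sum_product', sum_coe_sort (S ×ˢ Sᶜ) fun p => C p.1 p.2 ω]

theorem measure_cutCap_le_le {Ω : Type*} [MeasurableSpace Ω] {μ : Measure Ω}
    {C : V → V → Ω → ℝ} {S : Finset V}
    (hindep : iIndepFun (fun p : (S ×ˢ Sᶜ : Finset (V × V)) => C (p : V × V).1 (p : V × V).2) μ)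
    (hmeas : ∀ a b, AEMeasurable (C a b) μ) (hbdd : ∀ a b, ∀ᵐ ω ∂μ, C a b ω ∈ Set.Icc (0 : ℝ) 1)
    {lam ε : ℝ} (hlam : 0 ≤ lam) (hmean : ∀ a b, a ≠ b → lam ≤ μ[C a b]) (hε : 0 ≤ ε) :
    μ {ω | cutCap C S ω ≤ (1 - ε) * ∫ ω', cutCap C S ω' ∂μ}
      ≤ ENNReal.ofReal (exp (-2 * ε ^ 2 * lam ^ 2 * (#S * #Sᶜ : ℕ))) := by
  have := hindep.isProbabilityMeasure
  have hcross : ∀ p : (S ×ˢ Sᶜ : Finset (V × V)), (p : V × V).1 ≠ (p : V × V).2 := by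
    rintro ⟨⟨a, b⟩, hab⟩ (rfl : a = b)
    simp at hab
  have h := measureReal_sum_le_one_sub_mul_integral_le hindep (fun _ => hmeas _ _)
    (fun _ => hbdd _ _) hlam (fun p => hmean _ _ (hcross p)) hε
  rw [Fintype.card_coe, card_product] at h
  rw [cutCap_eq_sum_crossing]
  exact (ENNReal.le_ofReal_iff_toReal_le (measure_ne_top _ _) (exp_pos _).le).2 h

def stCuts (s t : V) : Finset (Finset V) := {S | s ∈ S ∧ t ∉ S}

@[simp]
theorem mem_stCuts {s t : V} {S : Finset V} : S ∈ stCuts s t ↔ s ∈ S ∧ t ∉ S := by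
  simp [stCuts]

theorem mem_powerset_compl_pair {s t : V} {T : Finset V} :
    T ∈ ({s, t}ᶜ : Finset V).powerset ↔ s ∉ T ∧ t ∉ T := by
  rw [mem_powerset, subset_compl_iff_disjoint_right, disjoint_insert_right,
    disjoint_singleton_right]

theorem sum_stCuts_eq_sum_powerset {M : Type*} [AddCommMonoid M] {s t : V} (hst : s ≠ t)
    (f : Finset V → M) :
    ∑ S ∈ stCuts s t, f S = ∑ T ∈ ({s, t}ᶜ : Finset V).powerset, f (insert s T) := by
  refine (sum_nbij' (fun T => insert s T) (fun S => S.erase s) ?_ ?_ ?_ ?_ ?_).symm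
  · intro T hT
    simp [(mem_powerset_compl_pair.1 hT).2, hst.symm]
  · intro S hS
    exact mem_powerset_compl_pair.2 (by simp [(mem_stCuts.1 hS).2])
  · intro T hT
    exact erase_insert (mem_powerset_compl_pair.1 hT).1
  · intro S hS
    exact insert_erase (mem_stCuts.1 hS).1
  · intro T _
    rfl

theorem sum_stCuts_card_eq {M : Type*} [AddCommMonoid M] {s t : V} (hst : s ≠ t)
    (h : ℕ → ℕ → M) :
    ∑ S ∈ stCuts s t, h #S #Sᶜ = ∑ j ∈ range (Fintype.card V - 2 + 1),
      (Fintype.card V - 2).choose j • h (j + 1) (Fintype.card V - 2 + 1 - j) := by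
  have hU : #({s, t}ᶜ : Finset V) = Fintype.card V - 2 := by
    rw [card_compl, card_pair hst]
  have h2 : 1 < Fintype.card V := Fintype.one_lt_card_iff_nontrivial.2 ⟨s, t, hst⟩
  rw [sum_stCuts_eq_sum_powerset hst, ← hU, ← sum_powerset_apply_card]
  refine sum_congr rfl fun T hT => ?_
  rw [card_compl, card_insert_of_notMem (mem_powerset_compl_pair.1 hT).1, hU]
  congr 1
  omega

end Cuts

theorem exp_neg_mul_succ_mul_le {q : ℝ} (hq : 0 ≤ q) {N j : ℕ} (hj : j ≤ N) :
    exp (-2 * q * ((j + 1) * (N + 1 - j) : ℕ))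
      ≤ exp (-2 * q * N) * (exp (-q * N) ^ j + exp (-q * N) ^ (N - j)) := by
  rw [← exp_nat_mul, ← exp_nat_mul, mul_add, ← exp_add, ← exp_add]
  have hcast : (((j + 1) * (N + 1 - j) : ℕ) : ℝ) = (j + 1) * (N + 1 - j) := by
    push_cast [Nat.cast_sub (by omega : j ≤ N + 1)]
    ring
  rw [hcast, Nat.cast_sub hj]
  have hj' : (j : ℝ) ≤ N := by exact_mod_cast hj
  rcases le_total (2 * j) N with h | h
  · have h' : (2 * j : ℝ) ≤ N := by exact_mod_cast h
    refine le_add_of_le_of_nonneg (exp_le_exp.2 ?_) (exp_pos _).le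
    nlinarith [mul_nonneg (mul_nonneg hq j.cast_nonneg) (sub_nonneg.2 h')]
  · have h' : (N : ℝ) ≤ 2 * j := by exact_mod_cast h
    refine le_add_of_nonneg_of_le (exp_pos _).le (exp_le_exp.2 ?_)
    nlinarith [mul_nonneg (mul_nonneg hq (sub_nonneg.2 hj')) (sub_nonneg.2 h')]

theorem sum_choose_mul_exp_le {q : ℝ} (hq : 0 ≤ q) (N : ℕ) :
    ∑ j ∈ range (N + 1), (N.choose j : ℝ) * exp (-2 * q * ((j + 1) * (N + 1 - j) : ℕ))
      ≤ 2 * exp (-2 * q * N) * (1 + exp (-q * N)) ^ N := by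
  set x := exp (-q * N)
  calc _ ≤ ∑ j ∈ range (N + 1), (N.choose j : ℝ) * (exp (-2 * q * N) * (x ^ j + x ^ (N - j))) :=
        sum_le_sum fun j hj => mul_le_mul_of_nonneg_left
          (exp_neg_mul_succ_mul_le hq (Nat.lt_succ_iff.1 (mem_range.1 hj))) (Nat.cast_nonneg _)
    _ = exp (-2 * q * N) * (∑ j ∈ range (N + 1), x ^ j * 1 ^ (N - j) * N.choose j
          + ∑ j ∈ range (N + 1), 1 ^ j * x ^ (N - j) * N.choose j) := by
        simp only [one_pow, mul_one, one_mul, mul_sum, ← sum_add_distrib]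
        exact sum_congr rfl fun j _ => by ring
    _ = 2 * exp (-2 * q * N) * (1 + x) ^ N := by
        rw [← add_pow, ← add_pow, add_comm x]
        ring

theorem stmt_2_general {V Ω : Type*} [Fintype V] [DecidableEq V] [MeasureSpace Ω]
    (n : ℕ) (hn : Fintype.card V = n)
    (s t : V) (hst : s ≠ t)
    (lam : ℝ) (hlam0 : 0 < lam)
    (C : V → V → Ω → ℝ)
    (hmeas : ∀ a b, Measurable (C a b))
    (h01 : ∀ a b ω, C a b ω = 0 ∨ C a b ω = 1)
    (hlow : ∀ a b : V, a ≠ b → ENNReal.ofReal lam ≤ volume {ω | C a b ω = 1})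
    (hindep : IndepInCut C s t)
    (ε : ℝ) (hε : 0 < ε) :
    volume (⋃ (S : Finset V) (_ : s ∈ S ∧ t ∉ S),
        {ω | cutCap C S ω ≤ (1 - ε) * ∫ ω', cutCap C S ω'})
      ≤ ENNReal.ofReal (2 * Real.exp (-2 * ε ^ 2 * lam ^ 2 * ((n : ℝ) - 2)) *
          (1 + Real.exp (-(ε ^ 2) * lam ^ 2 * ((n : ℝ) - 2))) ^ (n - 2)) := by
  subst hn
  have : IsProbabilityMeasure (volume : Measure Ω) :=
    (hindep {s} (mem_singleton_self s) (by simpa using hst.symm)).isProbabilityMeasure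
  have hbdd : ∀ a b, ∀ᵐ ω, C a b ω ∈ Set.Icc (0 : ℝ) 1 := fun a b =>
    ae_of_all _ fun ω => by rcases h01 a b ω with h | h <;> simp [h]
  have hmean : ∀ a b, a ≠ b → lam ≤ ∫ ω, C a b ω := fun a b hab => by
    rw [integral_eq_measureReal_of_zero_or_one (hmeas a b) (h01 a b)]
    exact (ENNReal.ofReal_le_iff_le_toReal (measure_ne_top _ _)).1 (hlow a b hab)
  simp_rw [← mem_stCuts]
  refine (measure_biUnion_finset_le (stCuts s t) _).trans ?_
  calc _ ≤ ∑ S ∈ stCuts s t, ENNReal.ofReal (exp (-2 * ε ^ 2 * lam ^ 2 * (#S * #Sᶜ : ℕ))) :=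
        sum_le_sum fun S hS => measure_cutCap_le_le (hindep S (mem_stCuts.1 hS).1
          (mem_stCuts.1 hS).2) (fun a b => (hmeas a b).aemeasurable) hbdd hlam0.le hmean hε.le
    _ = ENNReal.ofReal (∑ S ∈ stCuts s t, exp (-2 * ε ^ 2 * lam ^ 2 * (#S * #Sᶜ : ℕ))) :=
        (ENNReal.ofReal_sum_of_nonneg fun _ _ => (exp_pos _).le).symm
    _ ≤ _ := ENNReal.ofReal_le_ofReal ?_
  rw [sum_stCuts_card_eq hst fun a b => exp (-2 * ε ^ 2 * lam ^ 2 * (a * b : ℕ))]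
  have hcard : 1 < Fintype.card V := Fintype.one_lt_card_iff_nontrivial.2 ⟨s, t, hst⟩
  convert sum_choose_mul_exp_le (q := ε ^ 2 * lam ^ 2) (by positivity) (Fintype.card V - 2)
    using 1
  · simp [nsmul_eq_mul, mul_assoc]
  · push_cast [Nat.cast_sub hcard]
    ring_nf

/-- paper's Corollary 4. Union bound over all `s`-`t` cuts for the
events `A_S = {C(S) ≤ (1-ε) E[C(S)]}`. -/
theorem stmt_2 {V Ω : Type*} [Fintype V] [DecidableEq V] [MeasureSpace Ω]
    [IsProbabilityMeasure (volume : Measure Ω)]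
    (n : ℕ) (hn : Fintype.card V = n) (hn4 : 4 ≤ n)
    (s t : V) (hst : s ≠ t)
    (lam : ℝ) (hlam0 : 0 < lam) (hlam1 : lam ≤ 1)
    (C : V → V → Ω → ℝ)
    (hsymm : ∀ a b, C a b = C b a)
    (hmeas : ∀ a b, Measurable (C a b))
    (h01 : ∀ a b ω, C a b ω = 0 ∨ C a b ω = 1)
    (hlow : ∀ a b : V, a ≠ b → ENNReal.ofReal lam ≤ volume {ω | C a b ω = 1})
    (hindep : IndepInCut C s t)
    (ε : ℝ) (hε : 0 < ε) :
    volume (⋃ (S : Finset V) (_ : s ∈ S ∧ t ∉ S),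
        {ω | cutCap C S ω ≤ (1 - ε) * ∫ ω', cutCap C S ω'})
      ≤ ENNReal.ofReal (2 * Real.exp (-2 * ε ^ 2 * lam ^ 2 * ((n : ℝ) - 2)) *
          (1 + Real.exp (-(ε ^ 2) * lam ^ 2 * ((n : ℝ) - 2))) ^ (n - 2)) :=
  stmt_2_general n hn s t hst lam hlam0 C hmeas h01 hlow hindep ε hε
end

section
/- Let n ≥ 5 be an integer, let k be an even integer with 2 ≤ k ≤ n−3, and let w₁, w₂ ≥ 0 be reals. On the vertex set {0,1,…,n−1} assign to each unordered pair {i,j} of distinct vertices the weight w(i,j) = w₁ if the ring distance satisfies d(i,j) ≤ k/2, and w(i,j) = w₂ if d(i,j) > k/2. Then the minimum, over all subsets S of the vertex set with S ≠ ∅ and S ≠ {0,…,n−1}, of the cut weight Σ_{i ∈ S, j ∉ S} w(i,j), equals k·w₁ + (n−1−k)·w₂; in particular this minimum is attained by every singleton S. -/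
/-!
Write `c_S(d)` for the number of `i ∈ S` with `i + d ∉ S`. The weight of `{i, i + d}` depends
only on `d`, so the cut of `S` is `∑_d w(d) c_S(d)`. If `d` is not a period of `S`, the set of
such `i` is a nonempty union of cosets of the stabilizer `P` of `S`, so `c_S(d) ≥ |P|`. Hence for
any set `D` of shifts with `0 ∉ D` and `D ⊄ P` we get `∑_{d ∈ D} c_S(d) ≥ |P| |D \ P| ≥ |D|`,
since `|D ∩ P| < |P|`. For a nonempty proper `S` the shift `1` is not a period, so neither the
near shifts (which contain `1`) nor the far shifts (which contain two consecutive shifts) lie in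
`P`. A singleton has `c(d) = 1` for every `d ≠ 0`, which gives equality.
-/

open Finset

/-- The ring distance on vertices `{0, …, n-1}` arranged on a cycle:
`d(i,j) = min(|i-j|, n - |i-j|)`. -/
def ringDist (n : ℕ) (i j : Fin n) : ℕ :=
  min (Nat.dist i.val j.val) (n - Nat.dist i.val j.val)

/-- Weight assignment of the paper's Lemma 6: lattice pairs (ring distance at most `k/2`)
get weight `w₁` and all other pairs get weight `w₂`. -/
noncomputable def latticeWeight (n k : ℕ) (w₁ w₂ : ℝ) (i j : Fin n) : ℝ :=
  if ringDist n i j ≤ k / 2 then w₁ else w₂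

open Pointwise AddAction

section ShiftExits
variable {G : Type*} [AddCommGroup G] [DecidableEq G] (S : Finset G)

def exitCount (d : G) : ℕ := #{i ∈ S | i + d ∉ S}

variable {S}

lemma add_mem_iff_of_mem_stabilizer {p : G} (hp : p ∈ stabilizer G S) (i : G) :
    i + p ∈ S ↔ i ∈ S := by
  rw [mem_stabilizer_iff] at hp
  conv_rhs => rw [← vadd_mem_vadd_finset_iff (s := S) p, hp]
  rw [add_comm]; rfl

lemma mem_stabilizer_of_forall_add_mem {d : G} (h : ∀ i ∈ S, i + d ∈ S) :
    d ∈ stabilizer G S := by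
  refine mem_stabilizer_iff.2 (eq_of_subset_of_card_le ?_ (card_vadd_finset d S).ge)
  intro x hx
  obtain ⟨i, hi, rfl⟩ := mem_vadd_finset.1 hx
  rw [vadd_eq_add, add_comm]
  exact h i hi

lemma stabilizer_ne_top [Fintype G] (hS : S.Nonempty) (hSu : S ≠ univ) :
    stabilizer G S ≠ ⊤ := by
  intro htop
  obtain ⟨i, hi⟩ := hS
  obtain ⟨j, hj⟩ : ∃ j, j ∉ S := by
    by_contra! h
    exact hSu (eq_univ_iff_forall.2 h)
  have := (add_mem_iff_of_mem_stabilizer (htop ▸ AddSubgroup.mem_top (j - i)) i).2 hi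
  rw [add_sub_cancel] at this
  exact hj this

lemma card_stabilizer_le_exitCount [Finite G] {d : G} (hd : d ∉ stabilizer G S) :
    Nat.card (stabilizer G S) ≤ exitCount S d := by
  obtain ⟨i, hi, hid⟩ : ∃ i ∈ S, i + d ∉ S := by
    by_contra! h
    exact hd (mem_stabilizer_of_forall_add_mem h)
  rw [exitCount, ← Nat.card_eq_finsetCard]
  refine Nat.card_le_card_of_injective (fun p => ⟨i + p, ?_⟩) fun p q h => ?_
  · rw [mem_filter, add_mem_iff_of_mem_stabilizer p.2, add_right_comm,
      add_mem_iff_of_mem_stabilizer p.2]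
    exact ⟨hi, hid⟩
  · exact Subtype.ext (add_left_cancel (congrArg Subtype.val h))

lemma card_le_sum_exitCount [Fintype G] {D : Finset G} (hD₀ : 0 ∉ D)
    (hD : ∃ d ∈ D, d ∉ stabilizer G S) : #D ≤ ∑ d ∈ D, exitCount S d := by
  classical
  set q := Nat.card (stabilizer G S) with hq
  have hin : #{d ∈ D | d ∈ stabilizer G S} < q := by
    rw [hq, Nat.card_eq_fintype_card, Fintype.card_subtype]
    refine card_lt_card ⟨fun d hd => ?_, fun h => hD₀ ?_⟩
    · simp only [mem_filter] at hd ⊢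
      exact ⟨mem_univ d, hd.2⟩
    · exact (mem_filter.1 (h (mem_filter.2 ⟨mem_univ _, zero_mem _⟩))).1
  have hout : 0 < #{d ∈ D | d ∉ stabilizer G S} := by
    obtain ⟨d, hd, hds⟩ := hD
    exact card_pos.2 ⟨d, mem_filter.2 ⟨hd, hds⟩⟩
  have hsum : #{d ∈ D | d ∉ stabilizer G S} * q ≤ ∑ d ∈ D, exitCount S d :=
    calc #{d ∈ D | d ∉ stabilizer G S} * q
        = ∑ d ∈ D with d ∉ stabilizer G S, q := by rw [sum_const, smul_eq_mul]
      _ ≤ ∑ d ∈ D with d ∉ stabilizer G S, exitCount S d :=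
          sum_le_sum fun d hd => card_stabilizer_le_exitCount (mem_filter.1 hd).2
      _ ≤ ∑ d ∈ D, exitCount S d := sum_le_sum_of_subset (filter_subset _ _)
  have hsplit := card_filter_add_card_filter_not (s := D) (p := (· ∈ stabilizer G S))
  nlinarith

lemma sum_exitCount_singleton (v : G) {D : Finset G} (hD₀ : 0 ∉ D) :
    ∑ d ∈ D, exitCount {v} d = #D := by
  rw [card_eq_sum_ones]
  refine sum_congr rfl fun d hd => ?_
  have : v + d ≠ v := fun h => hD₀ (add_eq_left.1 h ▸ hd)
  simp [exitCount, filter_singleton, this]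

lemma sum_compl_sum_eq_sum_exitCount [Fintype G] {M : Type*} [AddCommMonoid M]
    (W : G → G → M) (f : G → M) (hW : ∀ i d, W i (i + d) = f d) :
    ∑ i ∈ S, ∑ j ∈ Sᶜ, W i j = ∑ d, exitCount S d • f d := by
  have hrow : ∀ i, ∑ j ∈ Sᶜ, W i j = ∑ d with i + d ∉ S, f d := fun i =>
    sum_nbij' (· - i) (i + ·) (by simp) (by simp) (by simp) (by simp) (by simp [← hW i])
  rw [sum_congr rfl fun i _ => hrow i,
    sum_comm' (t' := univ) (s' := fun d => {i ∈ S | i + d ∉ S}) (by simp)]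
  simp [exitCount]

end ShiftExits

section RingLattice
variable {n : ℕ} [NeZero n]

lemma ringDist_zero_left (d : Fin n) : ringDist n 0 d = min d.val (n - d.val) := by
  simp [ringDist, Nat.dist_zero_left]

lemma ringDist_add_right (i d : Fin n) : ringDist n i (i + d) = ringDist n 0 d := by
  have hi := i.isLt
  have hd := d.isLt
  rw [ringDist_zero_left, ringDist, Fin.val_add]
  rcases lt_or_ge (i.val + d.val) n with h | h
  · rw [Nat.mod_eq_of_lt h, Nat.dist_eq_sub_of_le (Nat.le_add_right _ _)]
    congr 1 <;> omega
  · rw [Nat.mod_eq_sub_mod h, Nat.mod_eq_of_lt (by omega), Nat.dist_eq_sub_of_le_right (by omega),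
      min_comm]
    congr 1 <;> omega

lemma latticeWeight_add_right (k : ℕ) (w₁ w₂ : ℝ) (i d : Fin n) :
    latticeWeight n k w₁ w₂ i (i + d) = latticeWeight n k w₁ w₂ 0 d := by
  rw [latticeWeight, latticeWeight, ringDist_add_right]

variable (n) in
def nearShifts (k : ℕ) : Finset (Fin n) :=
  ({d | ringDist n 0 d ≤ k / 2} : Finset (Fin n)).erase 0

variable (n) in
def farShifts (k : ℕ) : Finset (Fin n) := {d | k / 2 < ringDist n 0 d}

lemma zero_notMem_nearShifts (k : ℕ) : (0 : Fin n) ∉ nearShifts n k :=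
  notMem_erase 0 _

lemma zero_notMem_farShifts (k : ℕ) : (0 : Fin n) ∉ farShifts n k := by
  simp [farShifts, ringDist_zero_left]

lemma card_nearShifts_add_card_farShifts (k : ℕ) :
    #(nearShifts n k) + #(farShifts n k) = n - 1 := by
  have h0 : (0 : Fin n) ∈ ({d | ringDist n 0 d ≤ k / 2} : Finset (Fin n)) := by
    simp [ringDist_zero_left]
  have := card_filter_add_card_filter_not (s := (univ : Finset (Fin n)))
    (p := fun d => ringDist n 0 d ≤ k / 2)
  rw [nearShifts, farShifts, card_erase_of_mem h0]
  simp only [not_le, card_univ, Fintype.card_fin] at this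
  have := card_pos.2 ⟨0, h0⟩
  omega

lemma card_farShifts (k : ℕ) : #(farShifts n k) = n - 1 - 2 * (k / 2) := by
  have hn := NeZero.pos n
  have : (farShifts n k).map Fin.valEmbedding = Icc (k / 2 + 1) (n - k / 2 - 1) := by
    ext t
    simp only [farShifts, mem_map, mem_filter, mem_univ, true_and, ringDist_zero_left, mem_Icc,
      Fin.valEmbedding_apply]
    constructor
    · rintro ⟨d, hd, rfl⟩
      omega
    · intro ht
      exact ⟨⟨t, by omega⟩, by simp only; omega, rfl⟩
  rw [← card_map Fin.valEmbedding, this, Nat.card_Icc]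
  omega

lemma card_farShifts_of_even {k : ℕ} (hk : Even k) : #(farShifts n k) = n - 1 - k := by
  rw [card_farShifts, Nat.two_mul_div_two_of_even hk]

lemma card_nearShifts_of_even {k : ℕ} (hk : Even k) (hkn : k < n) : #(nearShifts n k) = k := by
  have := card_nearShifts_add_card_farShifts (n := n) k
  rw [card_farShifts_of_even hk] at this
  omega

lemma one_mem_nearShifts {k : ℕ} (hk : 2 ≤ k) (hn : 2 ≤ n) : (1 : Fin n) ∈ nearShifts n k := by
  have : (1 : Fin n).val = 1 := by rw [Fin.val_one', Nat.mod_eq_of_lt hn]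
  simp only [nearShifts, mem_erase, mem_filter, mem_univ, true_and, ringDist_zero_left, this]
  exact ⟨Fin.ne_of_val_ne (by rw [this]; simp), by omega⟩

open Fin.NatCast in
lemma one_notMem_stabilizer {S : Finset (Fin n)} (hS : S.Nonempty) (hSu : S ≠ univ) :
    (1 : Fin n) ∉ stabilizer (Fin n) S := by
  refine fun h => stabilizer_ne_top hS hSu (eq_top_iff.2 fun d _ => ?_)
  rw [← Fin.cast_val_eq_self d, ← nsmul_one]
  exact AddSubgroup.nsmul_mem _ h _

lemma exists_mem_farShifts_notMem_stabilizer {k : ℕ} (hkn : k + 3 ≤ n) {S : Finset (Fin n)}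
    (hS : S.Nonempty) (hSu : S ≠ univ) :
    ∃ d ∈ farShifts n k, d ∉ stabilizer (Fin n) S := by
  let a : Fin n := ⟨k / 2 + 1, by omega⟩
  have hfar : ∀ d : Fin n, k / 2 < d.val → d.val < n - k / 2 → d ∈ farShifts n k := by
    intro d h₁ h₂
    simp only [farShifts, mem_filter, mem_univ, true_and, ringDist_zero_left]
    omega
  have ha1 : (a + 1).val = k / 2 + 2 := by
    rw [Fin.val_add, Fin.val_one', Nat.add_mod_mod]
    exact Nat.mod_eq_of_lt (show k / 2 + 1 + 1 < n by omega)
  by_contra! h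
  have ha := h a (hfar a (Nat.lt_succ_self _) (show k / 2 + 1 < n - k / 2 by omega))
  have ha' := h (a + 1) (hfar _ (by omega) (by omega))
  exact one_notMem_stabilizer hS hSu (by simpa using AddSubgroup.sub_mem _ ha' ha)

lemma sum_compl_sum_latticeWeight (k : ℕ) (w₁ w₂ : ℝ) (S : Finset (Fin n)) :
    ∑ i ∈ S, ∑ j ∈ Sᶜ, latticeWeight n k w₁ w₂ i j =
      (∑ d ∈ nearShifts n k, exitCount S d) • w₁ + (∑ d ∈ farShifts n k, exitCount S d) • w₂ := by
  rw [sum_compl_sum_eq_sum_exitCount _ _ (latticeWeight_add_right k w₁ w₂)]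
  simp only [latticeWeight, smul_ite, sum_ite, ← sum_smul, nearShifts, farShifts, not_le]
  rw [sum_erase _ (by simp [exitCount])]

end RingLattice

theorem stmt_6_general (n k : ℕ) (hk2 : 2 ≤ k) (hk : k ≤ n - 3) (hke : Even k)
    (w₁ w₂ : ℝ) (hw₁ : 0 ≤ w₁) (hw₂ : 0 ≤ w₂) :
    (∀ S : Finset (Fin n), S.Nonempty → S ≠ Finset.univ →
        (k : ℝ) * w₁ + ((n : ℝ) - 1 - (k : ℝ)) * w₂ ≤
          ∑ i ∈ S, ∑ j ∈ Sᶜ, latticeWeight n k w₁ w₂ i j) ∧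
    (∀ v : Fin n,
        ∑ i ∈ ({v} : Finset (Fin n)), ∑ j ∈ ({v} : Finset (Fin n))ᶜ,
            latticeWeight n k w₁ w₂ i j =
          (k : ℝ) * w₁ + ((n : ℝ) - 1 - (k : ℝ)) * w₂) := by
  have : NeZero n := ⟨by omega⟩
  have hvalue : (k : ℝ) * w₁ + ((n : ℝ) - 1 - (k : ℝ)) * w₂ =
      #(nearShifts n k) • w₁ + #(farShifts n k) • w₂ := by
    rw [card_nearShifts_of_even hke (by omega), card_farShifts_of_even hke, nsmul_eq_mul,
      nsmul_eq_mul, Nat.cast_sub (by omega), Nat.cast_sub (by omega), Nat.cast_one]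
  refine ⟨fun S hS hSu => ?_, fun v => ?_⟩
  · rw [hvalue, sum_compl_sum_latticeWeight]
    gcongr
    · exact card_le_sum_exitCount (zero_notMem_nearShifts k)
        ⟨1, one_mem_nearShifts hk2 (by omega), one_notMem_stabilizer hS hSu⟩
    · exact card_le_sum_exitCount (zero_notMem_farShifts k)
        (exists_mem_farShifts_notMem_stabilizer (by omega) hS hSu)
  · rw [hvalue, sum_compl_sum_latticeWeight, sum_exitCount_singleton v (zero_notMem_nearShifts k),
      sum_exitCount_singleton v (zero_notMem_farShifts k)]

/-- paper's Lemma 6. In the complete weighted graph on `n` ring vertices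
where lattice pairs weigh `w₁ ≥ 0` and other pairs weigh `w₂ ≥ 0`, the global minimum cut
value equals `k w₁ + (n-1-k) w₂`, attained by every singleton. -/
theorem stmt_6 (n k : ℕ) (hn : 5 ≤ n) (hk2 : 2 ≤ k) (hk : k ≤ n - 3) (hke : Even k)
    (w₁ w₂ : ℝ) (hw₁ : 0 ≤ w₁) (hw₂ : 0 ≤ w₂) :
    (∀ S : Finset (Fin n), S.Nonempty → S ≠ Finset.univ →
        (k : ℝ) * w₁ + ((n : ℝ) - 1 - (k : ℝ)) * w₂ ≤
          ∑ i ∈ S, ∑ j ∈ Sᶜ, latticeWeight n k w₁ w₂ i j) ∧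
    (∀ v : Fin n,
        ∑ i ∈ ({v} : Finset (Fin n)), ∑ j ∈ ({v} : Finset (Fin n))ᶜ,
            latticeWeight n k w₁ w₂ i j =
          (k : ℝ) * w₁ + ((n : ℝ) - 1 - (k : ℝ)) * w₂) :=
  stmt_6_general n k hk2 hk hke w₁ w₂ hw₁ hw₂
end

section
/- Let n ≥ 5 be an integer, let k be an even integer with 2 ≤ k ≤ n−3, and let p ∈ [0,1]. On the vertex set {0,1,…,n−1} assign to each unordered pair {i,j} of distinct vertices the weight w(i,j) = 1−p if the ring distance satisfies d(i,j) ≤ k/2, and w(i,j) = p·k/(n−k−1) if d(i,j) > k/2. Then for any two distinct vertices s and t, the minimum over all subsets S with s ∈ S and t ∉ S of the cut weight Σ_{i ∈ S, j ∉ S} w(i,j) equals k. -/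
open Finset

/-- Expected-capacity weights of the small-world network with rewiring:
lattice pairs (ring distance at most `k/2`) have weight `1-p`, other pairs weight
`p k / (n-k-1)`. -/
noncomputable def rewiringWeight (n k : ℕ) (p : ℝ) (i j : Fin n) : ℝ :=
  if ringDist n i j ≤ k / 2 then 1 - p else p * (k : ℝ) / ((n : ℝ) - (k : ℝ) - 1)

/-!
Grouping the crossing pairs `(i, j)` of a cut `S` by their difference `d = j - i`, the cut
weight is `∑ d, #{i ∈ S | i + d ∉ S} • w d`, where `w d` is `1 - p` or `p k / (n - k - 1)`
according to the ring distance of `d` from `0`. Let `H` be the group of periods of `S`; it is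
proper because `s ∈ S` and `t ∉ S`. For `d ∉ H` the set `{i ∈ S | i + d ∉ S}` is nonempty and
`H`-invariant, so it has at least `#H` elements. Since `1 ∉ H`, no two consecutive residues lie
in `H`, so `H` contains at most about half of the arc `[-k/2, k/2]` of lattice shifts and of the
complementary arc. Counting then gives at least `k` lattice crossings and `n - k - 1` other
crossings, and the cut `{s}` attains both bounds.
-/

open scoped Fin.NatCast Pointwise

section ShiftExits

variable {G : Type*} [AddCommGroup G] [DecidableEq G]

def shiftExits (S : Finset G) (d : G) : Finset G := {i ∈ S | i + d ∉ S}

theorem sum_sum_compl_sub_eq_sum_card_shiftExits [Fintype G] {M : Type*} [AddCommMonoid M]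
    (S : Finset G) (w : G → M) :
    ∑ i ∈ S, ∑ j ∈ Sᶜ, w (j - i) = ∑ d, #(shiftExits S d) • w d := by
  have hrow (i : G) : ∑ j ∈ Sᶜ, w (j - i) = ∑ d, if i + d ∉ S then w d else 0 := by
    rw [show Sᶜ = ({j | j ∉ S} : Finset G) by ext; simp, Finset.sum_filter]
    exact Fintype.sum_equiv (Equiv.addLeft i).symm _ _ fun j => by simp [neg_add_eq_sub]
  simp_rw [hrow]
  rw [Finset.sum_comm]
  refine Finset.sum_congr rfl fun d _ => ?_
  rw [← Finset.sum_filter, Finset.sum_const]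
  rfl

theorem shiftExits_singleton (s d : G) : shiftExits {s} d = if d = 0 then ∅ else {s} := by
  simp [shiftExits, Finset.filter_singleton]

theorem sum_card_shiftExits_singleton (s : G) (D : Finset G) :
    ∑ d ∈ D, #(shiftExits {s} d) = #(D.erase 0) := by
  simp_rw [shiftExits_singleton, apply_ite Finset.card, Finset.card_empty, Finset.card_singleton,
    ← Finset.filter_ne', Finset.card_filter]
  exact Finset.sum_congr rfl fun d _ => by split_ifs <;> simp_all

theorem shiftExits_nonempty {S : Finset G} {d : G} (hd : d ∉ AddAction.stabilizer G S) :
    (shiftExits S d).Nonempty := by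
  by_contra hempty
  refine hd (AddAction.mem_stabilizer_finset'.2 fun i hi => ?_)
  rw [vadd_eq_add, add_comm]
  by_contra hid
  exact hempty ⟨i, Finset.mem_filter.2 ⟨hi, hid⟩⟩

theorem add_mem_shiftExits {S : Finset G} {d i h : G} (hi : i ∈ shiftExits S d)
    (hh : h ∈ AddAction.stabilizer G S) : h + i ∈ shiftExits S d := by
  rw [AddAction.mem_stabilizer_finset] at hh
  simp only [shiftExits, Finset.mem_filter] at hi ⊢
  refine ⟨(hh i).2 hi.1, fun hhid => hi.2 ((hh (i + d)).1 ?_)⟩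
  rwa [vadd_eq_add, ← add_assoc]

variable [Fintype G] (S : Finset G) [DecidablePred (· ∈ AddAction.stabilizer G S)]

theorem card_stabilizer_le_card_shiftExits {d : G} (hd : d ∉ AddAction.stabilizer G S) :
    #{h | h ∈ AddAction.stabilizer G S} ≤ #(shiftExits S d) := by
  obtain ⟨i, hi⟩ := shiftExits_nonempty hd
  refine Finset.card_le_card_of_injOn (· + i) (fun h hh => ?_) (add_left_injective i).injOn
  exact add_mem_shiftExits hi (Finset.mem_filter.1 hh).2

theorem card_stabilizer_mul_le_sum_card_shiftExits (D : Finset G) :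
    #{h | h ∈ AddAction.stabilizer G S} * (#D - #{d ∈ D | d ∈ AddAction.stabilizer G S})
      ≤ ∑ d ∈ D, #(shiftExits S d) := by
  rw [← Finset.card_filter_add_card_filter_not (s := D) (· ∈ AddAction.stabilizer G S),
    Nat.add_sub_cancel_left, Nat.mul_comm, ← smul_eq_mul]
  calc _ ≤ ∑ d ∈ D with d ∉ AddAction.stabilizer G S, #(shiftExits S d) :=
        Finset.card_nsmul_le_sum _ _ _ fun _ hd =>
          card_stabilizer_le_card_shiftExits S (Finset.mem_filter.1 hd).2
    _ ≤ ∑ d ∈ D, #(shiftExits S d) := Finset.sum_le_sum_of_subset (Finset.filter_subset _ _)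

end ShiftExits

theorem two_mul_card_filter_Ico_le {Q : ℕ → Prop} [DecidablePred Q]
    (hQ : ∀ v, Q v → ¬ Q (v + 1)) (a b : ℕ) : 2 * #{v ∈ Ico a b | Q v} ≤ b + 1 - a := by
  set F := {v ∈ Ico a b | Q v}
  have hdisj : Disjoint F (F.map (addRightEmbedding 1)) := by
    simp only [Finset.disjoint_left, Finset.mem_map, addRightEmbedding_apply, not_exists, not_and]
    rintro _ hw v hv rfl
    exact hQ v (Finset.mem_filter.1 hv).2 (Finset.mem_filter.1 hw).2
  have hsub : F ∪ F.map (addRightEmbedding 1) ⊆ Ico a (b + 1) := by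
    intro v
    simp only [F, Finset.mem_union, Finset.mem_map, Finset.mem_filter, Finset.mem_Ico,
      addRightEmbedding_apply]
    rintro (⟨⟨hav, hvb⟩, -⟩ | ⟨w, ⟨⟨haw, hwb⟩, -⟩, rfl⟩) <;> omega
  calc 2 * #F = #(F ∪ F.map (addRightEmbedding 1)) := by
        rw [Finset.card_union_of_disjoint hdisj, Finset.card_map]; ring
    _ ≤ b + 1 - a := by simpa using Finset.card_le_card hsub

theorem le_mul_sub_of_two_mul_le {N b h : ℕ} (hN : 2 ≤ N) (hb : 2 * b ≤ N + 1) (hbh : b < h) :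
    N ≤ h * (N - b) := by
  rcases Nat.eq_zero_or_pos b with rfl | hb0
  · simpa using Nat.le_mul_of_pos_left N (by omega : 0 < h)
  · calc N ≤ (b + 1) * (N - b) := by
          obtain ⟨c, rfl⟩ : ∃ c, N = b + 1 + c := ⟨N - b - 1, by omega⟩
          rw [show b + 1 + c - b = c + 1 by omega]
          nlinarith
      _ ≤ h * (N - b) := Nat.mul_le_mul_right _ hbh

def ringBall (n m : ℕ) [NeZero n] : Finset (Fin n) := {d | ringDist n 0 d ≤ m}

section Ring

variable {n : ℕ} [NeZero n]

theorem card_filter_val_add_mem (c : Fin n) (P : Fin n → Prop) [DecidablePred P]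
    {I : Finset ℕ} (hI : ∀ v ∈ I, v < n) :
    #{d | (d + c).val ∈ I ∧ P d} = #{v ∈ I | P ((v : ℕ) - c)} := by
  refine Finset.card_nbij' (fun d => (d + c).val) (fun v => (v : Fin n) - c) ?_ ?_ ?_ ?_
  · intro d hd
    simp_all
  · intro v hv
    simp only [Finset.coe_filter, Set.mem_ofPred_eq, Finset.mem_univ, true_and] at hv ⊢
    rw [sub_add_cancel, Fin.val_cast_of_lt (hI v hv.1)]
    exact hv
  · intro d _
    simp
  · intro v hv
    simp only [Finset.coe_filter, Set.mem_ofPred_eq] at hv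
    simp [Fin.val_cast_of_lt (hI v hv.1)]

theorem two_mul_card_filter_val_add_mem_Ico_le (H : AddSubgroup (Fin n))
    [DecidablePred (· ∈ H)] (h1 : (1 : Fin n) ∉ H) (c : Fin n) {a b : ℕ} (hb : b ≤ n) :
    2 * #{d | (d + c).val ∈ Ico a b ∧ d ∈ H} ≤ b + 1 - a := by
  rw [card_filter_val_add_mem c (· ∈ H) (I := Ico a b) fun v hv => by
    have := (Finset.mem_Ico.1 hv).2; omega]
  refine two_mul_card_filter_Ico_le (fun v hv hv1 => h1 ?_) a b
  simpa using H.sub_mem hv1 hv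

theorem one_notMem_stabilizer_s9 {S : Finset (Fin n)} {s t : Fin n} (hs : s ∈ S) (ht : t ∉ S) :
    (1 : Fin n) ∉ AddAction.stabilizer (Fin n) S := by
  intro h1
  have hts : t - s ∈ AddAction.stabilizer (Fin n) S := by
    simpa using AddSubgroup.nsmul_mem _ h1 (t - s).val
  rw [AddAction.mem_stabilizer_finset] at hts
  exact ht (by simpa using (hts s).2 hs)

theorem ringDist_zero_sub (i j : Fin n) : ringDist n 0 (j - i) = ringDist n i j := by
  unfold ringDist
  rcases le_or_gt i j with hij | hij
  · rw [Fin.sub_val_of_le hij]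
    simp only [Fin.val_zero, Nat.dist]
    omega
  · rw [Fin.coe_sub_iff_lt.2 hij]
    simp only [Fin.val_zero, Nat.dist]
    have := j.isLt
    rw [Fin.lt_def] at hij
    omega

variable {m : ℕ}

-- The ball of radius `m` about `0` is the arc of `2m + 1` residues starting at `-m`.
theorem mem_ringBall_iff (hm : 2 * m < n) (d : Fin n) :
    d ∈ ringBall n m ↔ (d + m).val ∈ Ico 0 (2 * m + 1) := by
  have hd := d.isLt
  have hmv : (m : Fin n).val = m := Fin.val_cast_of_lt (by omega)
  rw [ringBall, Finset.mem_filter, Finset.mem_Ico, Fin.val_add_eq_ite, hmv]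
  unfold ringDist
  simp only [Finset.mem_univ, true_and, Fin.val_zero, Nat.dist]
  split_ifs <;> omega

theorem notMem_ringBall_iff (hm : 2 * m < n) (d : Fin n) :
    d ∉ ringBall n m ↔ (d + m).val ∈ Ico (2 * m + 1) n := by
  rw [mem_ringBall_iff hm, Finset.mem_Ico, Finset.mem_Ico]
  have := (d + (m : Fin n)).isLt
  generalize ((d + (m : Fin n) : Fin n) : ℕ) = v at *
  omega

theorem card_ringBall (hm : 2 * m < n) : #(ringBall n m) = 2 * m + 1 := by
  have hball : ringBall n m
      = univ.filter fun d => (d + (m : Fin n)).val ∈ Ico 0 (2 * m + 1) ∧ True := by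
    ext d
    simp [mem_ringBall_iff hm]
  rw [hball, card_filter_val_add_mem (m : Fin n) (fun _ => True) fun v hv => by
      have := (Finset.mem_Ico.1 hv).2; omega]
  simp

theorem card_compl_ringBall (hm : 2 * m < n) : #(ringBall n m)ᶜ = n - (2 * m + 1) := by
  rw [Finset.card_compl, card_ringBall hm, Fintype.card_fin]

variable {S : Finset (Fin n)} {s t : Fin n}

theorem two_mul_le_sum_card_shiftExits_ringBall (hs : s ∈ S) (ht : t ∉ S) (hm : 2 * m < n) :
    2 * m ≤ ∑ d ∈ ringBall n m, #(shiftExits S d) := by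
  classical
  have hlower := card_stabilizer_mul_le_sum_card_shiftExits S (ringBall n m)
  rw [card_ringBall hm] at hlower
  have hperiodic :
      2 * #{d ∈ ringBall n m | d ∈ AddAction.stabilizer (Fin n) S} ≤ 2 * m + 2 := by
    have := two_mul_card_filter_val_add_mem_Ico_le _ (one_notMem_stabilizer_s9 hs ht) (m : Fin n)
      (a := 0) (b := 2 * m + 1) (by omega)
    convert this using 2
    · congr 1; ext d; simp [mem_ringBall_iff hm]
    · omega
  have hle : #{d ∈ ringBall n m | d ∈ AddAction.stabilizer (Fin n) S}
      ≤ #{d | d ∈ AddAction.stabilizer (Fin n) S} :=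
    Finset.card_le_card fun d => by simp +contextual
  have hpos : 0 < #{d | d ∈ AddAction.stabilizer (Fin n) S} := Finset.card_pos.2 ⟨0, by simp⟩
  refine le_trans ?_ hlower
  rcases Nat.eq_zero_or_pos m with rfl | hm0
  · simp
  calc 2 * m
      ≤ _ * (2 * m - (#{d ∈ ringBall n m | d ∈ AddAction.stabilizer (Fin n) S} - 1)) :=
        le_mul_sub_of_two_mul_le (by omega) (by omega) (by omega)
    _ ≤ _ := Nat.mul_le_mul_left _ (by omega)

theorem le_sum_card_shiftExits_compl_ringBall (hs : s ∈ S) (ht : t ∉ S) (hm : 2 * m + 3 ≤ n) :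
    n - (2 * m + 1) ≤ ∑ d ∈ (ringBall n m)ᶜ, #(shiftExits S d) := by
  classical
  have hlower := card_stabilizer_mul_le_sum_card_shiftExits S (ringBall n m)ᶜ
  rw [card_compl_ringBall (by omega)] at hlower
  have hperiodic : 2 * #{d ∈ (ringBall n m)ᶜ | d ∈ AddAction.stabilizer (Fin n) S}
      ≤ n - (2 * m + 1) + 1 := by
    have := two_mul_card_filter_val_add_mem_Ico_le _ (one_notMem_stabilizer_s9 hs ht) (m : Fin n)
      (a := 2 * m + 1) (b := n) le_rfl
    convert this using 2
    · congr 1; ext d; simp [← notMem_ringBall_iff (by omega : 2 * m < n)]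
    · omega
  have hlt : #{d ∈ (ringBall n m)ᶜ | d ∈ AddAction.stabilizer (Fin n) S}
      < #{d | d ∈ AddAction.stabilizer (Fin n) S} := by
    refine Finset.card_lt_card (Finset.ssubset_iff_of_subset (fun d => by simp +contextual) |>.2
      ⟨0, by simp, ?_⟩)
    simp [ringBall, ringDist]
  exact le_trans (le_mul_sub_of_two_mul_le (by omega) hperiodic hlt) hlower

theorem sum_cut_ringDist_eq {M : Type*} [AddCommMonoid M] (α β : M) (S : Finset (Fin n)) :
    ∑ i ∈ S, ∑ j ∈ Sᶜ, (if ringDist n i j ≤ m then α else β)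
      = (∑ d ∈ ringBall n m, #(shiftExits S d)) • α
        + (∑ d ∈ (ringBall n m)ᶜ, #(shiftExits S d)) • β := by
  have h := sum_sum_compl_sub_eq_sum_card_shiftExits S
    fun d => if ringDist n 0 d ≤ m then α else β
  simp only [ringDist_zero_sub] at h
  rw [h, Finset.sum_smul, Finset.sum_smul, ← Finset.sum_add_sum_compl (ringBall n m)]
  congr 1 <;> refine Finset.sum_congr rfl fun d hd => ?_ <;> simp_all [ringBall]

theorem isLeast_cut_ringDist {M : Type*} [AddCommMonoid M] [PartialOrder M]
    [IsOrderedAddMonoid M] (hm : 2 * m + 3 ≤ n) {α β : M} (hα : 0 ≤ α) (hβ : 0 ≤ β)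
    (hst : s ≠ t) :
    IsLeast {x | ∃ S : Finset (Fin n), s ∈ S ∧ t ∉ S ∧
        x = ∑ i ∈ S, ∑ j ∈ Sᶜ, if ringDist n i j ≤ m then α else β}
      ((2 * m) • α + (n - (2 * m + 1)) • β) := by
  refine ⟨⟨{s}, Finset.mem_singleton_self s, by simpa [eq_comm] using hst, ?_⟩, ?_⟩
  · rw [sum_cut_ringDist_eq, sum_card_shiftExits_singleton, sum_card_shiftExits_singleton,
      Finset.card_erase_of_mem (by simp [ringBall, ringDist]), card_ringBall (by omega),
      Finset.erase_eq_of_notMem (by simp [ringBall, ringDist]), card_compl_ringBall (by omega)]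
    simp
  · rintro _ ⟨S, hs, ht, rfl⟩
    rw [sum_cut_ringDist_eq]
    exact add_le_add
      (nsmul_le_nsmul_left hα (two_mul_le_sum_card_shiftExits_ringBall hs ht (by omega)))
      (nsmul_le_nsmul_left hβ (le_sum_card_shiftExits_compl_ringBall hs ht hm))

end Ring

theorem stmt_9_general (n k : ℕ) (hk2 : 2 ≤ k) (hk : k ≤ n - 3) (hke : Even k)
    (p : ℝ) (hp0 : 0 ≤ p) (hp1 : p ≤ 1)
    (s t : Fin n) (hst : s ≠ t) :
    IsLeast {x : ℝ | ∃ S : Finset (Fin n), s ∈ S ∧ t ∉ S ∧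
        x = ∑ i ∈ S, ∑ j ∈ Sᶜ, rewiringWeight n k p i j}
      (k : ℝ) := by
  obtain ⟨m, rfl⟩ := hke
  have hm : 2 * m + 3 ≤ n := by omega
  have : NeZero n := ⟨by omega⟩
  have hden : (0 : ℝ) < n - (m + m : ℕ) - 1 := by
    rw [sub_sub, sub_pos]
    exact_mod_cast (by omega : m + m + 1 < n)
  have hweight (i j : Fin n) : rewiringWeight n (m + m) p i j
      = if ringDist n i j ≤ m then 1 - p else p * (m + m : ℕ) / (n - (m + m : ℕ) - 1) := by
    simp [rewiringWeight, (by omega : (m + m) / 2 = m)]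
  have hvalue : (2 * m) • (1 - p)
      + (n - (2 * m + 1)) • (p * (m + m : ℕ) / (n - (m + m : ℕ) - 1)) = ((m + m : ℕ) : ℝ) := by
    rw [nsmul_eq_mul, nsmul_eq_mul, Nat.cast_sub (by omega)]
    field_simp
    push_cast
    ring
  have key := isLeast_cut_ringDist hm (sub_nonneg.2 hp1)
    (div_nonneg (mul_nonneg hp0 (Nat.cast_nonneg (m + m))) hden.le) hst
  rw [hvalue] at key
  simpa only [hweight] using key

/-- the computation of `c_min = k` in the paper's Theorem 3.
In the expected-capacity graph of the small-world network with rewiring, the minimum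
`s`-`t` cut weight equals `k`, for any distinct `s`, `t`. -/
theorem stmt_9 (n k : ℕ) (hn : 5 ≤ n) (hk2 : 2 ≤ k) (hk : k ≤ n - 3) (hke : Even k)
    (p : ℝ) (hp0 : 0 ≤ p) (hp1 : p ≤ 1)
    (s t : Fin n) (hst : s ≠ t) :
    IsLeast {x : ℝ | ∃ S : Finset (Fin n), s ∈ S ∧ t ∉ S ∧
        x = ∑ i ∈ S, ∑ j ∈ Sᶜ, rewiringWeight n k p i j}
      (k : ℝ) :=
  stmt_9_general n k hk2 hk hke p hp0 hp1 s t hst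
end
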